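/- arXiv:2208.14940 — 3 statements merged into one kernel-verified Lean document; each statement's English description precedes it below -/
import Mathlib

section
/- Let V : ℝ → ℝ be continuous and let μ_V be a compactly supported probability measure on ℝ with bounded density and finite logarithmic energy, such that h^{μ_V} + V = c_V on supp(μ_V) for a constant c_V, where h^{μ_V} = (−log|·|)∗μ_V; set ζ_V = h^{μ_V} + V − c_V. Then for every N and every X_N = (x_1,…,x_N) ∈ ℝ^N with pairwise distinct coordinates, H_N^V(X_N) = N²·I_V(μ_V) + N·∑_{i=1}^N ζ_V(x_i) + F_N(X_N, μ_V). -/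
open MeasureTheory Real Set Filter
open scoped Classical Topology ENNReal NNReal

noncomputable section

/-! ## Generic log-gas quantities -/

/-- Hamiltonian of the one-dimensional log-gas with potential `V`. -/
def Hamil (V : ℝ → ℝ) (N : ℕ) (X : Fin N → ℝ) : ℝ :=
  (1/2) * ∑ i : Fin N, ∑ j : Fin N, (if i ≠ j then -Real.log |X i - X j| else 0)
    + N * ∑ i : Fin N, V (X i)

/-- Partition function `Z_{N,β}`. -/
def partZ (β : ℝ) (V : ℝ → ℝ) (N : ℕ) : ℝ :=
  ∫ X : Fin N → ℝ, Real.exp (-β * Hamil V N X)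

/-- Gibbs measure `P_{N,β}`. -/
def gibbs (β : ℝ) (V : ℝ → ℝ) (N : ℕ) : Measure (Fin N → ℝ) :=
  volume.withDensity fun X => ENNReal.ofReal (Real.exp (-β * Hamil V N X) / partZ β V N)

/-- Energy functional `I_W(μ)`. -/
def enFun (W : ℝ → ℝ) (μ : Measure ℝ) : ℝ :=
  (1/2) * ∫ x, (∫ y, (-Real.log |x - y|) ∂μ) ∂μ + ∫ x, W x ∂μ

/-- Fluctuation of the linear statistic `ξ`. -/
def fluct (μ : Measure ℝ) (N : ℕ) (ξ : ℝ → ℝ) (X : Fin N → ℝ) : ℝ :=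
  (∑ i : Fin N, ξ (X i)) - N * ∫ x, ξ x ∂μ

/-- Double integral of a kernel `K` against the square of the fluctuation measure
`∑ δ_{x_i} - Nμ`. -/
def fluctPair (μ : Measure ℝ) (N : ℕ) (K : ℝ → ℝ → ℝ) (X : Fin N → ℝ) : ℝ :=
  (∑ i : Fin N, ∑ j : Fin N, K (X i) (X j))
    - N * ∑ i : Fin N, ∫ y, K (X i) y ∂μ
    - N * ∑ j : Fin N, ∫ x, K x (X j) ∂μ
    + (N:ℝ)^2 * ∫ x, (∫ y, K x y ∂μ) ∂μ

/-- Next-order energy `F_N(X_N, μ)` (off-diagonal double integral of `-log` against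
`(∑ δ_{x_i} - Nμ)⊗²`). -/
def nextOrderF (N : ℕ) (X : Fin N → ℝ) (μ : Measure ℝ) : ℝ :=
  (1/2) * ((∑ i : Fin N, ∑ j : Fin N, (if i ≠ j then -Real.log |X i - X j| else 0))
    - 2 * N * ∑ i : Fin N, ∫ y, -Real.log |X i - y| ∂μ
    + (N:ℝ)^2 * ∫ x, (∫ y, -Real.log |x - y| ∂μ) ∂μ)

/-- `C^k` norm of a function: sup of the derivatives of order `≤ k`. -/
def Cnorm (k : ℕ) (θ : ℝ → ℝ) : ℝ :=
  ⨆ i : Fin (k+1), ⨆ x : ℝ, |iteratedDeriv i.1 θ x|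

/-- Fourier transform with the convention `∫ f(x) e^{-iλx} dx`. -/
def fourierT (f : ℝ → ℂ) (l : ℝ) : ℂ :=
  ∫ x : ℝ, f x * Complex.exp (-(Complex.I * (l : ℂ) * (x : ℂ)))

/-- Squared `H^{1/2}` seminorm of a complex-valued function. -/
def H12C (f : ℝ → ℂ) : ℝ :=
  (1/(4*π^2)) * ∫ l : ℝ, |l| * ‖fourierT f l‖^2

/-- Squared `H^{1/2}` seminorm of a real-valued function. -/
def H12 (θ : ℝ → ℝ) : ℝ := H12C fun x => (θ x : ℂ)

/-- Rescaled test function `ξ_{z,L} = θ((·-z)/L)`. -/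
def resc (θ : ℝ → ℝ) (z L : ℝ) : ℝ → ℝ := fun x => θ ((x - z)/L)

/-! ## Electrostatic machinery -/

/-- Euclidean norm on `ℝ²`. -/
def enorm2 (p : ℝ × ℝ) : ℝ := Real.sqrt (p.1^2 + p.2^2)

/-- Electrostatic potential of the configuration `Y` relative to the measure `μ`. -/
def elPot (μ : Measure ℝ) (N : ℕ) (Y : Fin N → ℝ) (p : ℝ × ℝ) : ℝ :=
  (∑ i : Fin N, -Real.log (enorm2 (p - (Y i, 0))))
    - ∫ y, -Real.log (enorm2 (p - (y, 0))) ∂μ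

/-- Planar truncation `f̄_η`. -/
def fbar (η : ℝ) (p : ℝ × ℝ) : ℝ := max (Real.log (η / enorm2 p)) 0

/-- One-dimensional truncation `f_η`. -/
def ftr (η : ℝ) (x : ℝ) : ℝ := max (Real.log (η / |x|)) 0

/-- Minimal distances `r̃_i` relative to the set `Ω`. -/
def rtil (N : ℕ) (Y : Fin N → ℝ) (Ω : Set ℝ) (i : Fin N) : ℝ :=
  if Metric.infDist (Y i) (frontier Ω) < 1/2 then 1/4
  else (1/4) * (insert (1:ℝ)
      ((Finset.univ.filter fun j : Fin N => j ≠ i ∧ Y j ∈ Ω).image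
        fun j => |Y i - Y j|)).min' (Finset.insert_nonempty _ _)

/-- Truncated electrostatic potential `u_{r̃}`. -/
def elPotTr (μ : Measure ℝ) (N : ℕ) (Y : Fin N → ℝ) (Ω : Set ℝ) (p : ℝ × ℝ) : ℝ :=
  elPot μ N Y p - ∑ i : Fin N, fbar (rtil N Y Ω i) (p - (Y i, 0))

/-- Squared (Euclidean) gradient of a function on `ℝ²`. -/
def gradSq (f : ℝ × ℝ → ℝ) (p : ℝ × ℝ) : ℝ :=
  (fderiv ℝ f p (1, 0))^2 + (fderiv ℝ f p (0, 1))^2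

/-- The true local energy `F^Ω(Y, μ)` at scale `L`. -/
def locEnergy (μ : Measure ℝ) (N : ℕ) (Y : Fin N → ℝ) (Ω : Set ℝ) (L : ℝ) : ℝ :=
  (1/(4*π)) * ((∫ p in Ω ×ˢ Icc (-L) L, gradSq (elPotTr μ N Y Ω) p)
      - 2*π * ∑ i ∈ Finset.univ.filter (fun i : Fin N => Y i ∈ Ω), (-Real.log (rtil N Y Ω i)))
    - ∑ i ∈ Finset.univ.filter (fun i : Fin N => Y i ∈ Ω), ∫ x, ftr (rtil N Y Ω i) (x - Y i) ∂μ

/-- Number of points of the configuration lying in `Ω`. -/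
def ptsIn (N : ℕ) (Y : Fin N → ℝ) (Ω : Set ℝ) : ℕ :=
  (Finset.univ.filter fun i : Fin N => Y i ∈ Ω).card

/-- Transport map on points, `φ_t = id + tψ`. -/
def phiT (ψ : ℝ → ℝ) (t x : ℝ) : ℝ := x + t * ψ x

/-- Transport map on configurations. -/
def PhiN (ψ : ℝ → ℝ) (t : ℝ) (N : ℕ) (X : Fin N → ℝ) : Fin N → ℝ := fun i => phiT ψ t (X i)

/-- The condition `‖t ψ'‖_∞ < 1/2`. -/
def SmallPert (t : ℝ) (ψ : ℝ → ℝ) : Prop := ∃ ρ : ℝ, ρ < 1/2 ∧ ∀ x, |t * deriv ψ x| ≤ ρ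

/-! ## The β-ensemble setup satisfying (A1)–(A4) -/

/-- Data for a one-dimensional log-gas in the multi-cut, non-critical regime. -/
structure LogGas where
  β : ℝ
  V : ℝ → ℝ
  n : ℕ
  a : Fin n → ℝ
  b : Fin n → ℝ
  S : ℝ → ℝ
  cV : ℝ
  hβ : 0 < β
  hV : ContDiff ℝ 3 V
  hgrowth : Tendsto (fun x => V x + Real.log |x|) (cocompact ℝ) atTop
  hn : 0 < n
  hab : ∀ i, a i < b i
  hord : ∀ i j : Fin n, i < j → b i < a j
  hS : ContDiff ℝ (⊤ : ℕ∞) S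

namespace LogGas

variable (g : LogGas)

/-- Support `Σ_V` of the equilibrium measure. -/
def sptV : Set ℝ := ⋃ i, Icc (g.a i) (g.b i)

/-- `σ(x) = ∏ √(|x-aᵢ||x-bᵢ|)`. -/
def σf (x : ℝ) : ℝ := ∏ i, Real.sqrt (|x - g.a i| * |x - g.b i|)

/-- Density of the equilibrium measure. -/
def dens (x : ℝ) : ℝ := Set.indicator g.sptV (fun y => g.S y * g.σf y) x

/-- The equilibrium measure `μ_V`. -/
def μV : Measure ℝ := volume.withDensity fun x => ENNReal.ofReal (g.dens x)

/-- Logarithmic potential `h^{μ_V}`. -/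
def hpot (x : ℝ) : ℝ := ∫ y, -Real.log |x - y| ∂g.μV

/-- Effective potential `ζ_V`. -/
def ζV (x : ℝ) : ℝ := g.hpot x + g.V x - g.cV

/-- `d = (1/4) minᵢ (bᵢ - aᵢ)`. -/
def dB : ℝ := (1/4) * ⨅ i, (g.b i - g.a i)

/-- The bulk `𝖡`. -/
def Bulk : Set ℝ := {x ∈ g.sptV | g.dB ≤ Metric.infDist x (frontier g.sptV)}

/-- The blown-up bulk `𝖡' = N·𝖡`. -/
def Bulk' (N : ℕ) : Set ℝ := (fun x => (N:ℝ) * x) '' g.Bulk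

/-- Density of the blown-up equilibrium measure. -/
def densN (N : ℕ) (x : ℝ) : ℝ := g.dens (x / N)

/-- Blown-up equilibrium measure `μ` (total mass `N`). -/
def μN (N : ℕ) : Measure ℝ := volume.withDensity fun x => ENNReal.ofReal (g.densN N x)

/-- The endpoints of `Σ_V`. -/
def endpts : Finset ℝ := Finset.univ.image g.a ∪ Finset.univ.image g.b

/-- Minimal distance between two distinct endpoints of `Σ_V`. -/
def minGap : ℝ := sInf {r : ℝ | ∃ p ∈ g.endpts, ∃ q ∈ g.endpts, p ≠ q ∧ r = |p - q|}

/-- The Gibbs measure `P_{N,β}`. -/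
def gibbsN (N : ℕ) : Measure (Fin N → ℝ) := gibbs g.β g.V N

/-- Assumptions (A1)–(A4), together with the standing assumption that the partition
functions are finite and positive. -/
structure A : Prop where
  hSpos : ∀ x ∈ g.sptV, 0 < g.S x
  hprob : IsProbabilityMeasure g.μV
  hmin : ∀ μ : Measure ℝ, IsProbabilityMeasure μ →
    (∃ K : Set ℝ, IsCompact K ∧ μ Kᶜ = 0) → enFun g.V g.μV ≤ enFun g.V μ
  huniq : ∀ μ : Measure ℝ, IsProbabilityMeasure μ →
    (∃ K : Set ℝ, IsCompact K ∧ μ Kᶜ = 0) → enFun g.V μ = enFun g.V g.μV → μ = g.μV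
  hEL : ∀ x ∈ g.sptV, g.hpot x + g.V x = g.cV
  hζ : ∀ x ∉ g.sptV, 0 < g.ζV x
  hZint : ∀ N : ℕ, Integrable (fun X : Fin N → ℝ => Real.exp (-g.β * Hamil g.V N X))
  hZpos : ∀ N : ℕ, 0 < partZ g.β g.V N

/-- Characterization of the transport map `ψ` (with constant `cξ`) associated with the
test function `ξ`, relative to the neighborhood `U` of `Σ_V`. -/
def IsTransport (U : Set ℝ) (ξ ψ : ℝ → ℝ) (cξ : ℝ) : Prop :=
  (∀ x ∈ g.sptV, ψ x = -(1/(π^2 * g.S x)) * ∫ y in g.sptV, (ξ y - ξ x)/(g.σf y * (y - x)))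
  ∧ (∀ x ∈ U \ g.sptV,
      ψ x = ((∫ y in g.sptV, ψ y * g.dens y / (x - y)) + ξ x + cξ)
        / ((∫ y in g.sptV, g.dens y / (x - y)) - deriv g.V x))
  ∧ (∀ x ∈ U, -(ψ x) * deriv g.V x + (∫ y, (ψ x - ψ y)/(x - y) ∂g.μV) = ξ x + cξ)

/-- `U` is a bounded open neighborhood of `Σ_V` on which `ζ_V' = M σ` with `M > 0` smooth. -/
def GoodNbhd (U : Set ℝ) : Prop :=
  IsOpen U ∧ Bornology.IsBounded U ∧ g.sptV ⊆ U ∧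
  ∃ M : ℝ → ℝ, ContDiffOn ℝ (⊤ : ℕ∞) M (U \ g.sptV) ∧
    ∀ x ∈ U \ g.sptV, 0 < M x ∧ deriv g.ζV x = M x * g.σf x

end LogGas

/-- Energy difference `τ_t` associated with the transport `ψ` of `ξ`. -/
def tauT (g : LogGas) (ξ ψ : ℝ → ℝ) (t c x : ℝ) : ℝ :=
  (∫ y, -Real.log |phiT ψ t x - phiT ψ t y| ∂g.μV)
    + (g.V (phiT ψ t x) + t * ξ (phiT ψ t x))
    - (∫ y, -Real.log |x - y| ∂g.μV) - g.V x - t * c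

/-- `Main₁ = I_{V_t}(φ_t#μ_V) - I_V(μ_V) - t ∫ ξ dμ_V`. -/
def Main1 (g : LogGas) (ξ ψ : ℝ → ℝ) (t : ℝ) : ℝ :=
  enFun (fun x => g.V x + t * ξ x) (g.μV.map (phiT ψ t)) - enFun g.V g.μV
    - t * ∫ x, ξ x ∂g.μV

/-- `Error₁ = (1-β) ∫ log φ_t' dμ_V`. -/
def Err1 (g : LogGas) (ψ : ℝ → ℝ) (t : ℝ) : ℝ :=
  (1 - g.β) * ∫ x, Real.log (1 + t * deriv ψ x) ∂g.μV

/-- The kernel `K_t(x,y) = -log |(φ_t x - φ_t y)/(x-y)|`, extended by `-log φ_t'` on the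
diagonal. -/
def Kker (ψ : ℝ → ℝ) (t x y : ℝ) : ℝ :=
  if x = y then -Real.log (1 + t * deriv ψ x)
  else -Real.log (|phiT ψ t x - phiT ψ t y| / |x - y|)

/-- `Error₂`. -/
def Err2 (g : LogGas) (ψ : ℝ → ℝ) (t : ℝ) (N : ℕ) (X : Fin N → ℝ) : ℝ :=
  fluctPair g.μV N (Kker ψ t) X

/-- `Error₃`. -/
def Err3 (g : LogGas) (ξ ψ : ℝ → ℝ) (t c : ℝ) (N : ℕ) (X : Fin N → ℝ) : ℝ :=
  fluct g.μV N (fun x => (1 - 1/g.β) * Real.log (1 + t * deriv ψ x) + N * tauT g ξ ψ t c x) X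

/-! Since `μ` lives on `tsupport ρ`, integrating the Euler–Lagrange relation `h^μ + V = c_V`
against `μ` identifies `c_V = ∬ -log|x - y| dμ dμ + ∫ V dμ`. With this value of the constant
the splitting of `H_N` is an algebraic identity: the `N²` terms cancel. -/

theorem ae_mem_tsupport_withDensity_ofReal {α : Type*} [TopologicalSpace α] [MeasurableSpace α]
    [OpensMeasurableSpace α] (ν : Measure α) (ρ : α → ℝ) :
    ∀ᵐ x ∂ν.withDensity (fun x => ENNReal.ofReal (ρ x)), x ∈ tsupport ρ := by
  have hmeas : MeasurableSet (tsupport ρ)ᶜ := (isClosed_tsupport ρ).measurableSet.compl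
  rw [ae_iff, ← compl_def, withDensity_apply _ hmeas]
  refine (setLIntegral_congr_fun hmeas fun x hx => ?_).trans lintegral_zero
  rw [image_eq_zero_of_notMem_tsupport hx, ENNReal.ofReal_zero]

theorem integral_add_integral_eq_of_ae_add_eq {α : Type*} [MeasurableSpace α] {μ : Measure α}
    [IsProbabilityMeasure μ] {f g : α → ℝ} {c : ℝ} (hf : Integrable f μ) (hg : Integrable g μ)
    (hfg : ∀ᵐ x ∂μ, f x + g x = c) :
    (∫ x, f x ∂μ) + ∫ x, g x ∂μ = c := by
  rw [← integral_add hf hg, integral_congr_ae hfg, integral_const, probReal_univ, one_smul]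

theorem integrable_logPotential {μ : Measure ℝ} [SFinite μ]
    (hlog : Integrable (fun p : ℝ × ℝ => Real.log |p.1 - p.2|) (μ.prod μ)) :
    Integrable (fun x => ∫ y, -Real.log |x - y| ∂μ) μ := by
  simpa using hlog.neg.integral_prod_left

theorem hamil_eq_splitting (V : ℝ → ℝ) (μ : Measure ℝ) (c : ℝ)
    (hc : (∫ x, (∫ y, -Real.log |x - y| ∂μ) ∂μ) + ∫ x, V x ∂μ = c) (N : ℕ) (X : Fin N → ℝ) :
    Hamil V N X
      = (N:ℝ)^2 * enFun V μ
        + N * ∑ i : Fin N, ((∫ y, -Real.log |X i - y| ∂μ) + V (X i) - c)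
        + nextOrderF N X μ := by
  simp only [Hamil, enFun, nextOrderF, Finset.sum_sub_distrib, Finset.sum_add_distrib,
    Finset.sum_const, Finset.card_univ, Fintype.card_fin, nsmul_eq_mul, ← hc]
  ring

theorem stmt5_general (V : ℝ → ℝ) (hV : Continuous V)
    (ρ : ℝ → ℝ)
    (hρc : HasCompactSupport ρ)
    (μ : Measure ℝ) (hμ : μ = volume.withDensity fun x => ENNReal.ofReal (ρ x))
    (hprob : IsProbabilityMeasure μ)
    (hlog : Integrable (fun p : ℝ × ℝ => Real.log |p.1 - p.2|) (μ.prod μ))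
    (cV : ℝ) (hEL : ∀ x ∈ tsupport ρ, (∫ y, -Real.log |x - y| ∂μ) + V x = cV)
    (N : ℕ) (X : Fin N → ℝ) :
    Hamil V N X
      = (N:ℝ)^2 * enFun V μ
        + N * ∑ i : Fin N, ((∫ y, -Real.log |X i - y| ∂μ) + V (X i) - cV)
        + nextOrderF N X μ := by
  have hsupp : ∀ᵐ x ∂μ, x ∈ tsupport ρ := hμ ▸ ae_mem_tsupport_withDensity_ofReal volume ρ
  have hV_int : Integrable V μ := by
    simpa [IntegrableOn, Measure.restrict_eq_self_of_ae_mem hsupp] using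
      hV.continuousOn.integrableOn_compact (μ := μ) hρc
  refine hamil_eq_splitting V μ cV ?_ N X
  exact integral_add_integral_eq_of_ae_add_eq (integrable_logPotential hlog) hV_int
    (hsupp.mono hEL)

theorem stmt5 (V : ℝ → ℝ) (hV : Continuous V)
    (ρ : ℝ → ℝ) (M : ℝ) (hρ0 : ∀ x, 0 ≤ ρ x) (hρM : ∀ x, ρ x ≤ M)
    (hρc : HasCompactSupport ρ)
    (μ : Measure ℝ) (hμ : μ = volume.withDensity fun x => ENNReal.ofReal (ρ x))
    (hprob : IsProbabilityMeasure μ)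
    (hlog : Integrable (fun p : ℝ × ℝ => Real.log |p.1 - p.2|) (μ.prod μ))
    (cV : ℝ) (hEL : ∀ x ∈ tsupport ρ, (∫ y, -Real.log |x - y| ∂μ) + V x = cV)
    (N : ℕ) (X : Fin N → ℝ) (hX : Function.Injective X) :
    Hamil V N X
      = (N:ℝ)^2 * enFun V μ
        + N * ∑ i : Fin N, ((∫ y, -Real.log |X i - y| ∂μ) + V (X i) - cV)
        + nextOrderF N X μ :=
  stmt5_general V hV ρ hρc μ hμ hprob hlog cV hEL N X

end
end

section
/- Let (Ω, ℱ, 𝖯) be a probability space, X a real random variable, 𝒢 ∈ ℱ an event, and a, b, c > 0 constants such that E[exp(s·X)·1_𝒢] ≤ exp(a·|s| + b·s² + c·|s|³) for all s ∈ ℝ. Then for every k ∈ ℕ with k ≥ 1 there is a constant C_k > 0, depending only on k, such that E[|X|^k·1_𝒢] ≤ C_k·( a^k + b^{k/2} + c^{k/3} ). -/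
open MeasureTheory Real Set Filter
open scoped Classical Topology ENNReal NNReal

noncomputable section

theorem stmt17 (k : ℕ) (hk : 1 ≤ k) :
    ∃ C : ℝ, 0 < C ∧
      ∀ (Ω : Type*) (_ : MeasurableSpace Ω) (P : Measure Ω), IsProbabilityMeasure P →
      ∀ X : Ω → ℝ, Measurable X → ∀ G : Set Ω, MeasurableSet G →
      ∀ a b c : ℝ, 0 < a → 0 < b → 0 < c →
        (∀ s : ℝ, IntegrableOn (fun ω => Real.exp (s * X ω)) G P) →
        (∀ s : ℝ, (∫ ω in G, Real.exp (s * X ω) ∂P)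
            ≤ Real.exp (a * |s| + b * s^2 + c * |s|^3)) →
        (∫ ω in G, |X ω|^k ∂P) ≤ C * (a^k + b ^ ((k:ℝ)/2) + c ^ ((k:ℝ)/3)) := by
  refine ⟨2 * k.factorial * Real.exp 3, by positivity, ?_⟩
  intro Ω _ P hP X hX G hG a b c ha hb hc hint hbound
  set m : ℝ := max a (max (Real.sqrt b) (c ^ ((1:ℝ)/3))) with hmdef
  have hm0 : 0 < m := lt_max_of_lt_left ha
  set s : ℝ := 1 / m with hsdef
  have hs : 0 < s := by positivity
  have hf0 : (0:ℝ) < k.factorial := by exact_mod_cast k.factorial_pos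
  -- pointwise bound
  have key : ∀ x : ℝ, |x|^k ≤ (k.factorial / s^k) * (Real.exp (s * x) + Real.exp (-s * x)) := by
    intro x
    have h1 : (s * |x|)^k / k.factorial ≤ Real.exp (s * |x|) :=
      Real.pow_div_factorial_le_exp (x := s * |x|) (by positivity) k
    have h2 : Real.exp (s * |x|) ≤ Real.exp (s * x) + Real.exp (-s * x) := by
      rcases abs_cases x with ⟨h, _⟩ | ⟨h, _⟩
      · rw [h]; nlinarith [Real.exp_pos (-s * x)]
      · rw [h, show s * -x = -s * x by ring]
        nlinarith [Real.exp_pos (s * x)]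
    calc |x|^k = (k.factorial / s^k) * ((s * |x|)^k / k.factorial) := by
          rw [mul_pow]; field_simp
      _ ≤ (k.factorial / s^k) * (Real.exp (s * x) + Real.exp (-s * x)) :=
          mul_le_mul_of_nonneg_left (h1.trans h2) (by positivity)
  -- integrability
  have hint1 := hint s
  have hint2 := hint (-s)
  have hint2' : IntegrableOn (fun ω => Real.exp (-s * X ω)) G P := hint2
  have hgint : IntegrableOn
      (fun ω => (k.factorial / s^k) * (Real.exp (s * X ω) + Real.exp (-s * X ω))) G P :=
    (hint1.add hint2').const_mul _
  have hfint : IntegrableOn (fun ω => |X ω|^k) G P := by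
    refine Integrable.mono' hgint ((hX.abs.pow_const k).aestronglyMeasurable) ?_
    filter_upwards with ω
    rw [Real.norm_eq_abs, abs_of_nonneg (by positivity)]
    exact key (X ω)
  -- exponent bounds
  have hma : a ≤ m := le_max_left _ _
  have hmb : Real.sqrt b ≤ m := le_trans (le_max_left _ _) (le_max_right _ _)
  have hmc : c ^ ((1:ℝ)/3) ≤ m := le_trans (le_max_right _ _) (le_max_right _ _)
  have hb2 : b ≤ m^2 := by
    have := pow_le_pow_left₀ (Real.sqrt_nonneg b) hmb 2
    rwa [Real.sq_sqrt hb.le] at this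
  have hc3 : c ≤ m^3 := by
    have := pow_le_pow_left₀ (by positivity : (0:ℝ) ≤ c ^ ((1:ℝ)/3)) hmc 3
    rwa [← Real.rpow_natCast (c ^ ((1:ℝ)/3)) 3, ← Real.rpow_mul hc.le,
      show (1:ℝ)/3 * (3:ℕ) = 1 by norm_num, Real.rpow_one] at this
  have hexp : ∀ t : ℝ, |t| = s → (∫ ω in G, Real.exp (t * X ω) ∂P) ≤ Real.exp 3 := by
    intro t ht
    refine (hbound t).trans (Real.exp_le_exp.2 ?_)
    have h1 : a * |t| ≤ 1 := by
      rw [ht, hsdef, mul_one_div, div_le_one hm0]; exact hma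
    have h2 : b * t^2 ≤ 1 := by
      rw [← sq_abs, ht, hsdef, div_pow, one_pow, mul_one_div, div_le_one (by positivity)]
      exact hb2
    have h3 : c * |t|^3 ≤ 1 := by
      rw [ht, hsdef, div_pow, one_pow, mul_one_div, div_le_one (by positivity)]
      exact hc3
    linarith
  have hE1 : (∫ ω in G, Real.exp (s * X ω) ∂P) ≤ Real.exp 3 :=
    hexp s (abs_of_pos hs)
  have hE2 : (∫ ω in G, Real.exp (-s * X ω) ∂P) ≤ Real.exp 3 :=
    hexp (-s) (by rw [abs_neg, abs_of_pos hs])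
  -- m^k bound
  have hmk : m^k ≤ a^k + b ^ ((k:ℝ)/2) + c ^ ((k:ℝ)/3) := by
    have hbk : (Real.sqrt b)^k = b ^ ((k:ℝ)/2) := by
      rw [Real.sqrt_eq_rpow, ← Real.rpow_natCast (b ^ ((1:ℝ)/2)) k, ← Real.rpow_mul hb.le,
        show (1:ℝ)/2 * (k:ℝ) = (k:ℝ)/2 by ring]
    have hck : (c ^ ((1:ℝ)/3))^k = c ^ ((k:ℝ)/3) := by
      rw [← Real.rpow_natCast (c ^ ((1:ℝ)/3)) k, ← Real.rpow_mul hc.le,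
        show (1:ℝ)/3 * (k:ℝ) = (k:ℝ)/3 by ring]
    have hak : (0:ℝ) ≤ a^k := by positivity
    have hbk' : (0:ℝ) ≤ (Real.sqrt b)^k := by positivity
    have hck' : (0:ℝ) ≤ (c ^ ((1:ℝ)/3))^k := by positivity
    have : m^k ≤ a^k + (Real.sqrt b)^k + (c ^ ((1:ℝ)/3))^k := by
      rcases max_choice a (max (Real.sqrt b) (c ^ ((1:ℝ)/3))) with h | h
      · rw [hmdef, h]; linarith
      · rcases max_choice (Real.sqrt b) (c ^ ((1:ℝ)/3)) with h' | h'
        · rw [hmdef, h, h']; linarith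
        · rw [hmdef, h, h']; linarith
    rwa [hbk, hck] at this
  -- final chain
  have hsk : s^k = 1 / m^k := by rw [hsdef, div_pow, one_pow]
  calc (∫ ω in G, |X ω|^k ∂P)
      ≤ ∫ ω in G, (k.factorial / s^k) * (Real.exp (s * X ω) + Real.exp (-s * X ω)) ∂P :=
        integral_mono hfint hgint fun ω => key (X ω)
    _ = (k.factorial / s^k) * ((∫ ω in G, Real.exp (s * X ω) ∂P)
          + (∫ ω in G, Real.exp (-s * X ω) ∂P)) := by
        rw [integral_const_mul, integral_add hint1 hint2']
    _ ≤ (k.factorial / s^k) * (Real.exp 3 + Real.exp 3) :=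
        mul_le_mul_of_nonneg_left (add_le_add hE1 hE2) (by positivity)
    _ = 2 * k.factorial * Real.exp 3 * m^k := by
        rw [hsk]; field_simp; ring
    _ ≤ 2 * k.factorial * Real.exp 3 * (a^k + b ^ ((k:ℝ)/2) + c ^ ((k:ℝ)/3)) :=
        mul_le_mul_of_nonneg_left hmk (by positivity)

end
end

section
/- Let φ : ℝ → ℝ be compactly supported and C¹. Then there is a constant C, depending only on φ, such that for every ℓ > 0 and every m ∈ ℝ, the function f(x) = e^{imx}·φ(x/ℓ) satisfies ‖f‖²_{H^{1/2}} ≤ C·√(1 + m²·ℓ²). -/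
open MeasureTheory Real Set Filter
open scoped Classical Topology ENNReal NNReal

noncomputable section

/-!
The Fourier transform of `x ↦ e^{imx} φ(x/ℓ)` is `λ ↦ ℓ φ̂(ℓ(λ - m))`, so the substitution
`u = ℓ(λ - m)` turns `4π² ‖f‖²_{H^{1/2}}` into
`∫ |ℓm + u| |φ̂(u)|² du ≤ ℓ|m| ∫ |φ̂|² + ∫ |u| |φ̂|²`.
Both integrals are finite because `|u| |φ̂|² ≤ |φ̂|² + |φ'^|²` and the Fourier transform of a
bounded integrable `f` is square integrable: damping by a Gaussian, `∫ e^{-εu²} |f̂|²` is the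
pairing of `f` with its heat-kernel smoothing, hence at most `2π ‖f‖_∞ ‖f‖₁` uniformly in `ε`,
and Fatou's lemma lets `ε → 0`.
-/
lemma norm_exp_neg_I_mul_mul (l x : ℝ) :
    ‖Complex.exp (-(Complex.I * (l : ℂ) * (x : ℂ)))‖ = 1 := by
  rw [Complex.norm_exp]; simp

lemma norm_fourierT_le (f : ℝ → ℂ) (l : ℝ) : ‖fourierT f l‖ ≤ ∫ x, ‖f x‖ :=
  (norm_integral_le_integral_norm _).trans_eq <| by
    simp only [norm_mul, norm_exp_neg_I_mul_mul, mul_one]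

lemma continuous_fourierT {f : ℝ → ℂ} (hf : Integrable f) : Continuous (fourierT f) :=
  continuous_of_dominated (fun l => hf.aestronglyMeasurable.mul (by fun_prop))
    (fun l => .of_forall fun x => by rw [norm_mul, norm_exp_neg_I_mul_mul, mul_one])
    hf.norm (.of_forall fun x => by fun_prop)

lemma integral_fourierT_mul {f h : ℝ → ℂ} (hf : Integrable f) (hh : Integrable h) :
    ∫ u, fourierT f u * h u = ∫ x, f x * fourierT h x := by
  have hint : Integrable (Function.uncurry fun u x : ℝ =>
      f x * Complex.exp (-(Complex.I * (u : ℂ) * (x : ℂ))) * h u) (volume.prod volume) := by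
    have := (hh.mul_prod hf).mul_bdd (c := 1)
      (g := fun z : ℝ × ℝ => Complex.exp (-(Complex.I * (z.1 : ℂ) * (z.2 : ℂ))))
      (by fun_prop) (.of_forall fun z => (norm_exp_neg_I_mul_mul z.1 z.2).le)
    refine this.congr (.of_forall fun z => ?_)
    simp only [Function.uncurry]; ring
  simp only [fourierT, ← integral_mul_const, ← integral_const_mul]
  rw [integral_integral_swap hint]
  congr 1; ext x; congr 1; ext u; ring_nf

lemma fourierT_exp_mul (f : ℝ → ℂ) (m l : ℝ) :
    fourierT (fun x => Complex.exp (Complex.I * m * x) * f x) l = fourierT f (l - m) := by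
  simp only [fourierT]
  congr 1; ext x
  rw [mul_comm (Complex.exp _), mul_assoc, ← Complex.exp_add]
  push_cast; ring_nf

lemma fourierT_comp_div (f : ℝ → ℂ) {a : ℝ} (ha : 0 < a) (l : ℝ) :
    fourierT (fun x => f (x / a)) l = a * fourierT f (a * l) := by
  simp only [fourierT]
  have := Measure.integral_comp_div
    (fun y : ℝ => f y * Complex.exp (-(Complex.I * ((a * l : ℝ) : ℂ) * (y : ℂ)))) a
  rw [abs_of_pos ha, Complex.real_smul] at this
  rw [← this]
  congr 1; ext x
  have ha' : (a : ℂ) ≠ 0 := Complex.ofReal_ne_zero.mpr ha.ne'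
  push_cast
  congr 3
  field_simp

open FourierTransform in
lemma fourierT_eq_fourier (f : ℝ → ℂ) (l : ℝ) : fourierT f l = 𝓕 f (l / (2 * π)) := by
  rw [Real.fourier_real_eq, fourierT]
  congr 1; ext x
  rw [Circle.smul_def, Real.fourierChar_apply, smul_eq_mul, mul_comm]
  congr 2
  push_cast
  field_simp

open FourierTransform in
lemma fourierT_deriv {f : ℝ → ℂ} (hf : Integrable f) (hdf : Differentiable ℝ f)
    (hf' : Integrable (deriv f)) (u : ℝ) :
    fourierT (deriv f) u = Complex.I * u * fourierT f u := by
  rw [fourierT_eq_fourier, fourierT_eq_fourier, Real.fourier_deriv hf hdf hf']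
  dsimp only
  rw [smul_eq_mul]
  congr 1
  push_cast
  field_simp

lemma conj_fourierT (f : ℝ → ℂ) (u : ℝ) :
    starRingEnd ℂ (fourierT f u) = fourierT (fun y => starRingEnd ℂ (f (-y))) u := by
  rw [fourierT, ← integral_conj, ← integral_neg_eq_self]
  congr 1; ext y
  rw [map_mul, ← Complex.exp_conj]
  simp

lemma fourierT_gaussian {ε : ℝ} (hε : 0 < ε) (s : ℝ) :
    fourierT (fun u => (Real.exp (-ε * u ^ 2) : ℂ)) s
      = ((√(π / ε) * Real.exp (-s ^ 2 / (4 * ε)) : ℝ) : ℂ) := by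
  have hb : 0 < (ε : ℂ).re := by simpa using hε
  have := fourierIntegral_gaussian hb (-(s : ℂ))
  rw [fourierT]
  convert this using 1
  · congr 1; ext u
    rw [mul_comm, Complex.ofReal_exp]
    push_cast; ring_nf
  · rw [Complex.ofReal_mul, Complex.ofReal_exp, Real.sqrt_eq_rpow,
      Complex.ofReal_cpow (by positivity)]
    push_cast; ring_nf

lemma norm_fourierT_gaussian {ε : ℝ} (hε : 0 < ε) (s : ℝ) :
    ‖fourierT (fun u => (Real.exp (-ε * u ^ 2) : ℂ)) s‖
      = √(π / ε) * Real.exp (-(1 / (4 * ε)) * s ^ 2) := by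
  rw [fourierT_gaussian hε, Complex.norm_real, Real.norm_of_nonneg (by positivity)]
  ring_nf

lemma integrable_norm_fourierT_gaussian {ε : ℝ} (hε : 0 < ε) :
    Integrable fun s => ‖fourierT (fun u => (Real.exp (-ε * u ^ 2) : ℂ)) s‖ := by
  simp only [norm_fourierT_gaussian hε]
  exact (integrable_exp_neg_mul_sq (by positivity)).const_mul _

lemma integral_norm_fourierT_gaussian {ε : ℝ} (hε : 0 < ε) :
    ∫ s, ‖fourierT (fun u => (Real.exp (-ε * u ^ 2) : ℂ)) s‖ = 2 * π := by
  simp only [norm_fourierT_gaussian hε]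
  rw [integral_const_mul, integral_gaussian, ← Real.sqrt_mul (by positivity)]
  rw [show π / ε * (π / (1 / (4 * ε))) = (2 * π) ^ 2 by field_simp; ring,
    Real.sqrt_sq (by positivity)]

lemma integrable_gaussian_complex {ε : ℝ} (hε : 0 < ε) :
    Integrable fun u : ℝ => (Real.exp (-ε * u ^ 2) : ℂ) :=
  (integrable_exp_neg_mul_sq hε).ofReal

lemma integrable_gaussian_mul_fourierT {f : ℝ → ℂ} (hf : Integrable f) {ε : ℝ} (hε : 0 < ε) :
    Integrable fun u => (Real.exp (-ε * u ^ 2) : ℂ) * fourierT f u :=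
  (integrable_gaussian_complex hε).mul_bdd (continuous_fourierT hf).aestronglyMeasurable
    (.of_forall (norm_fourierT_le f))

lemma integrable_gaussian_mul_sq_norm_fourierT {f : ℝ → ℂ} (hf : Integrable f) {ε : ℝ}
    (hε : 0 < ε) : Integrable fun u => Real.exp (-ε * u ^ 2) * ‖fourierT f u‖ ^ 2 :=
  (integrable_exp_neg_mul_sq hε).mul_bdd (c := (∫ x, ‖f x‖) ^ 2)
    ((continuous_fourierT hf).norm.pow 2).aestronglyMeasurable
    (.of_forall fun u => by
      rw [norm_pow, norm_norm]
      exact pow_le_pow_left₀ (norm_nonneg _) (norm_fourierT_le f u) 2)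

lemma norm_fourierT_gaussian_mul_fourierT_le {f : ℝ → ℂ} (hf : Integrable f) {M : ℝ}
    (hM : ∀ x, ‖f x‖ ≤ M) {ε : ℝ} (hε : 0 < ε) (y : ℝ) :
    ‖fourierT (fun u => (Real.exp (-ε * u ^ 2) : ℂ) * fourierT f u) y‖ ≤ 2 * π * M := by
  set g : ℝ → ℂ := fun u => (Real.exp (-ε * u ^ 2) : ℂ)
  have hgy : Integrable fun u : ℝ => Complex.exp (Complex.I * (-y : ℝ) * u) * g u :=
    (integrable_gaussian_complex hε).bdd_mul (c := 1) (by fun_prop)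
      (.of_forall fun u => by rw [Complex.norm_exp]; simp)
  have hsmooth : fourierT (fun u => g u * fourierT f u) y = ∫ x, f x * fourierT g (x + y) :=
    calc fourierT (fun u => g u * fourierT f u) y
        = ∫ u, fourierT f u * (Complex.exp (Complex.I * (-y : ℝ) * u) * g u) := by
          rw [fourierT]; congr 1; ext u; push_cast; ring_nf
      _ = ∫ x, f x * fourierT g (x + y) := by
          rw [integral_fourierT_mul hf hgy]
          simp only [fourierT_exp_mul, sub_neg_eq_add]
  rw [hsmooth]
  calc ‖∫ x, f x * fourierT g (x + y)‖
      ≤ ∫ x, M * ‖fourierT g (x + y)‖ := by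
        refine norm_integral_le_of_norm_le
          (((integrable_norm_fourierT_gaussian hε).comp_add_right y).const_mul M)
          (.of_forall fun x => ?_)
        rw [norm_mul]
        exact mul_le_mul_of_nonneg_right (hM x) (norm_nonneg _)
    _ = 2 * π * M := by
        rw [integral_const_mul, integral_add_right_eq_self
          (fun x => ‖fourierT g x‖) y, integral_norm_fourierT_gaussian hε, mul_comm]

lemma integral_gaussian_mul_sq_norm_fourierT_le {f : ℝ → ℂ} (hf : Integrable f) {M : ℝ}
    (hM : ∀ x, ‖f x‖ ≤ M) {ε : ℝ} (hε : 0 < ε) :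
    ∫ u, Real.exp (-ε * u ^ 2) * ‖fourierT f u‖ ^ 2 ≤ 2 * π * M * ∫ x, ‖f x‖ := by
  set H : ℝ → ℂ := fun u => (Real.exp (-ε * u ^ 2) : ℂ) * fourierT f u
  have hrefl : Integrable fun y => starRingEnd ℂ (f (-y)) :=
    Complex.conjCLE.toContinuousLinearMap.integrable_comp hf.comp_neg
  have hpair : ((∫ u, Real.exp (-ε * u ^ 2) * ‖fourierT f u‖ ^ 2 : ℝ) : ℂ)
      = ∫ y, starRingEnd ℂ (f (-y)) * fourierT H y := by
    rw [← integral_fourierT_mul hrefl (integrable_gaussian_mul_fourierT hf hε),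
      ← integral_complex_ofReal]
    congr 1; ext u
    rw [← conj_fourierT, mul_left_comm, Complex.conj_mul']
    push_cast; ring
  have hnonneg : 0 ≤ ∫ u, Real.exp (-ε * u ^ 2) * ‖fourierT f u‖ ^ 2 :=
    integral_nonneg fun u => by positivity
  rw [← Real.norm_of_nonneg hnonneg, ← Complex.norm_real, hpair]
  calc ‖∫ y, starRingEnd ℂ (f (-y)) * fourierT H y‖
      ≤ ∫ y, ‖f (-y)‖ * (2 * π * M) := by
        refine norm_integral_le_of_norm_le (hf.comp_neg.norm.mul_const _)
          (.of_forall fun y => ?_)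
        rw [norm_mul, RCLike.norm_conj]
        exact mul_le_mul_of_nonneg_left
          (norm_fourierT_gaussian_mul_fourierT_le hf hM hε y) (norm_nonneg _)
    _ = 2 * π * M * ∫ x, ‖f x‖ := by
        rw [integral_mul_const, integral_neg_eq_self (fun x => ‖f x‖), mul_comm]

lemma integrable_sq_norm_fourierT {f : ℝ → ℂ} (hf : Integrable f) {M : ℝ}
    (hM : ∀ x, ‖f x‖ ≤ M) : Integrable fun u => ‖fourierT f u‖ ^ 2 := by
  set G : ℕ → ℝ → ℝ := fun n u => Real.exp (-(1 / (n + 1)) * u ^ 2) * ‖fourierT f u‖ ^ 2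
  have hε : ∀ n : ℕ, (0 : ℝ) < 1 / (n + 1) := fun n => by positivity
  have hG : ∀ n, Integrable (G n) := fun n => integrable_gaussian_mul_sq_norm_fourierT hf (hε n)
  have hlim : ∀ u, Tendsto (fun n => G n u) atTop (𝓝 (‖fourierT f u‖ ^ 2)) := fun u => by
    have : Tendsto (fun n : ℕ => Real.exp (-(1 / (n + 1 : ℝ)) * u ^ 2)) atTop (𝓝 1) := by
      simpa using ((tendsto_one_div_add_atTop_nhds_zero_nat (𝕜 := ℝ)).neg.mul_const
        (u ^ 2)).rexp
    simpa only [one_mul] using this.mul_const (‖fourierT f u‖ ^ 2)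
  refine integrable_of_tendsto (.of_forall hlim) (fun n => (hG n).aestronglyMeasurable)
    (ne_top_of_le_ne_top ENNReal.ofReal_ne_top (b := ENNReal.ofReal (2 * π * M * ∫ x, ‖f x‖))
      (liminf_le_of_frequently_le' (.of_forall fun n => ?_)))
  rw [← ofReal_integral_norm_eq_lintegral_enorm (hG n)]
  refine ENNReal.ofReal_le_ofReal ((integral_congr_ae (.of_forall fun u => ?_)).trans_le
    (integral_gaussian_mul_sq_norm_fourierT_le hf hM (hε n)))
  exact Real.norm_of_nonneg (by positivity)

lemma integrable_abs_mul_sq_norm_fourierT {f : ℝ → ℂ} (hf : ContDiff ℝ 1 f)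
    (hfc : HasCompactSupport f) : Integrable fun u => |u| * ‖fourierT f u‖ ^ 2 := by
  have hint : Integrable f := hf.continuous.integrable_of_hasCompactSupport hfc
  have hcont' : Continuous (deriv f) := hf.continuous_deriv le_rfl
  have hint' : Integrable (deriv f) := hcont'.integrable_of_hasCompactSupport hfc.deriv
  obtain ⟨M, hM⟩ := hf.continuous.bounded_above_of_compact_support hfc
  obtain ⟨M', hM'⟩ := hcont'.bounded_above_of_compact_support hfc.deriv
  refine ((integrable_sq_norm_fourierT hint hM).add (integrable_sq_norm_fourierT hint' hM')).mono'
    (continuous_abs.mul ((continuous_fourierT hint).norm.pow 2)).aestronglyMeasurable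
    (.of_forall fun u => ?_)
  rw [Real.norm_of_nonneg (by positivity), Pi.add_apply,
    fourierT_deriv hint (hf.differentiable one_ne_zero) hint', norm_mul, norm_mul,
    Complex.norm_I, one_mul, Complex.norm_real, Real.norm_eq_abs, mul_pow, sq_abs]
  have : |u| ≤ 1 + u ^ 2 := by nlinarith [sq_abs u, sq_nonneg (|u| - 1)]
  nlinarith [mul_le_mul_of_nonneg_right this (sq_nonneg ‖fourierT f u‖)]

lemma integral_abs_mul_sq_norm_fourierT_exp_mul_comp_div (f : ℝ → ℂ) {a : ℝ} (ha : 0 < a)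
    (m : ℝ) :
    ∫ l, |l| * ‖fourierT (fun x => Complex.exp (Complex.I * m * x) * f (x / a)) l‖ ^ 2
      = ∫ u, |a * m + u| * ‖fourierT f u‖ ^ 2 := by
  set G : ℝ → ℝ := fun u => |a * m + u| * ‖fourierT f u‖ ^ 2
  calc ∫ l, |l| * ‖fourierT (fun x => Complex.exp (Complex.I * m * x) * f (x / a)) l‖ ^ 2
      = ∫ l, a * G (a * (l - m)) := by
        congr 1; ext l
        rw [fourierT_exp_mul, fourierT_comp_div f ha, norm_mul, Complex.norm_real,
          Real.norm_of_nonneg ha.le]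
        simp only [G]
        rw [show a * m + a * (l - m) = a * l by ring, abs_mul, abs_of_pos ha]
        ring
    _ = ∫ u, G u := by
        rw [integral_const_mul, integral_sub_right_eq_self (fun t => G (a * t)),
          Measure.integral_comp_mul_left, abs_inv, abs_of_pos ha, smul_eq_mul,
          mul_inv_cancel_left₀ ha.ne']

lemma H12C_exp_mul_comp_div_le {f : ℝ → ℂ} (hf : Integrable fun u => ‖fourierT f u‖ ^ 2)
    (hf' : Integrable fun u => |u| * ‖fourierT f u‖ ^ 2) {a : ℝ} (ha : 0 < a) (m : ℝ) :
    H12C (fun x => Complex.exp (Complex.I * m * x) * f (x / a))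
      ≤ (1 / (4 * π ^ 2)) * ((∫ u, ‖fourierT f u‖ ^ 2) + ∫ u, |u| * ‖fourierT f u‖ ^ 2)
        * √(1 + m ^ 2 * a ^ 2) := by
  set A := ∫ u, ‖fourierT f u‖ ^ 2
  set B := ∫ u, |u| * ‖fourierT f u‖ ^ 2
  have hA : 0 ≤ A := integral_nonneg fun u => by positivity
  have hB : 0 ≤ B := integral_nonneg fun u => by positivity
  have hlin : ∫ u, |a * m + u| * ‖fourierT f u‖ ^ 2 ≤ a * |m| * A + B := by
    rw [← integral_const_mul, ← integral_add (hf.const_mul _) hf']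
    refine integral_mono_of_nonneg (.of_forall fun u => by positivity)
      ((hf.const_mul _).add hf') (.of_forall fun u => ?_)
    have : |a * m + u| ≤ a * |m| + |u| := by
      simpa [abs_mul, abs_of_pos ha] using abs_add_le (a * m) u
    nlinarith [mul_le_mul_of_nonneg_right this (sq_nonneg ‖fourierT f u‖)]
  have hs1 : a * |m| ≤ √(1 + m ^ 2 * a ^ 2) :=
    Real.le_sqrt_of_sq_le (by nlinarith [sq_abs m])
  have hs2 : 1 ≤ √(1 + m ^ 2 * a ^ 2) := Real.le_sqrt_of_sq_le (by nlinarith)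
  have hsqrt : a * |m| * A + B ≤ (A + B) * √(1 + m ^ 2 * a ^ 2) := by
    nlinarith [mul_le_mul_of_nonneg_right hs1 hA, mul_le_mul_of_nonneg_right hs2 hB]
  rw [H12C, integral_abs_mul_sq_norm_fourierT_exp_mul_comp_div f ha, mul_assoc]
  gcongr
  exact hlin.trans hsqrt

theorem stmt19 (φ : ℝ → ℝ) (hφc : HasCompactSupport φ) (hφ1 : ContDiff ℝ 1 φ) :
    ∃ C : ℝ, 0 < C ∧
      ∀ ℓ : ℝ, 0 < ℓ → ∀ m : ℝ,
        H12C (fun x => Complex.exp (Complex.I * (m:ℂ) * (x:ℂ)) * ((φ (x/ℓ) : ℝ) : ℂ))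
          ≤ C * Real.sqrt (1 + m^2 * ℓ^2) := by
  set Φ : ℝ → ℂ := fun x => (φ x : ℂ)
  have hΦ1 : ContDiff ℝ 1 Φ := Complex.ofRealCLM.contDiff.comp hφ1
  have hΦc : HasCompactSupport Φ := hφc.comp_left Complex.ofReal_zero
  have hΦ : Integrable Φ := hΦ1.continuous.integrable_of_hasCompactSupport hΦc
  obtain ⟨M, hM⟩ := hΦ1.continuous.bounded_above_of_compact_support hΦc
  set K := (1 / (4 * π ^ 2)) * ((∫ u, ‖fourierT Φ u‖ ^ 2) + ∫ u, |u| * ‖fourierT Φ u‖ ^ 2)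
  have hK : 0 ≤ K := by positivity
  refine ⟨K + 1, by linarith, fun ℓ hℓ m => ?_⟩
  calc _ ≤ K * √(1 + m ^ 2 * ℓ ^ 2) :=
        H12C_exp_mul_comp_div_le (integrable_sq_norm_fourierT hΦ hM)
          (integrable_abs_mul_sq_norm_fourierT hΦ1 hΦc) hℓ m
    _ ≤ (K + 1) * √(1 + m ^ 2 * ℓ ^ 2) := by gcongr; linarith

end
end
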